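/- arXiv:2507.12700 — 3 statements merged into one kernel-verified Lean document; each statement's English description precedes it below -/
import Mathlib

section
/- Let E be a real Banach space, let t0 < t1 be real numbers with τ = t1 − t0 and midpoint tm = (t0 + t1)/2, and let u : ℝ → E be twice continuously differentiable on an open interval containing [t0, t1]. Then ‖(u(t0) + u(t1))/2 − u(tm)‖² ≤ (τ³/24) · ∫_{t0}^{t1} ‖u''(t)‖² dt. -/
/-!
Taylor's formula with integral remainder about the midpoint `tm` writes the defect
`(u t0 + u t1)/2 - u tm` as half the sum of the two first-order remainders towards `t0` and `t1`,
the first-derivative terms cancelling because `tm` is equidistant from both ends. The remainder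
towards an end `b` is `∫ (b - t) • u'' t` over a half-interval of length `τ/2`, so Cauchy–Schwarz
bounds its square by `(τ/2)³/3 = τ³/24` times `∫ ‖u''‖²` over that half, and
`‖(x + y)/2‖² ≤ (‖x‖² + ‖y‖²)/2` combines the two halves (even with the constant `τ³/48`).
-/

open MeasureTheory Set
open scoped Interval

section CauchySchwarz

variable {α : Type*} [MeasurableSpace α] {μ : Measure α}

theorem sq_integral_mul_le_integral_sq_mul_integral_sq {f g : α → ℝ}
    (hf : Integrable (fun a => f a ^ 2) μ) (hg : Integrable (fun a => g a ^ 2) μ)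
    (hfg : Integrable (fun a => f a * g a) μ) :
    (∫ a, f a * g a ∂μ) ^ 2 ≤ (∫ a, f a ^ 2 ∂μ) * ∫ a, g a ^ 2 ∂μ := by
  set A := ∫ a, f a ^ 2 ∂μ
  set B := ∫ a, f a * g a ∂μ
  set C := ∫ a, g a ^ 2 ∂μ
  have hquad : ∀ x : ℝ, 0 ≤ A * (x * x) + 2 * B * x + C := fun x => by
    have hexpand : ∫ a, (x * f a + g a) ^ 2 ∂μ = A * (x * x) + 2 * B * x + C := by
      have hpt : (fun a => (x * f a + g a) ^ 2)
          = fun a => (x * x) * f a ^ 2 + (2 * x) * (f a * g a) + g a ^ 2 := by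
        funext a; ring
      have hfirst : Integrable (fun a => (x * x) * f a ^ 2 + (2 * x) * (f a * g a)) μ :=
        (hf.const_mul _).add (hfg.const_mul _)
      rw [hpt, integral_add hfirst hg,
        integral_add (hf.const_mul (x * x)) (hfg.const_mul (2 * x)), integral_const_mul,
        integral_const_mul]
      ring
    exact hexpand ▸ integral_nonneg fun a => sq_nonneg _
  have hdiscrim := discrim_le_zero hquad
  rw [discrim] at hdiscrim
  linarith

variable {E : Type*} [NormedAddCommGroup E] [NormedSpace ℝ E]

theorem norm_integral_smul_sq_le {φ : α → ℝ} {g : α → E}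
    (hφ : Integrable (fun a => φ a ^ 2) μ) (hg : Integrable (fun a => ‖g a‖ ^ 2) μ)
    (hφg : Integrable (fun a => φ a • g a) μ) :
    ‖∫ a, φ a • g a ∂μ‖ ^ 2 ≤ (∫ a, φ a ^ 2 ∂μ) * ∫ a, ‖g a‖ ^ 2 ∂μ := by
  have hnorm : ‖∫ a, φ a • g a ∂μ‖ ≤ ∫ a, |φ a| * ‖g a‖ ∂μ := by
    simpa only [norm_smul, Real.norm_eq_abs] using
      norm_integral_le_integral_norm (fun a => φ a • g a)
  calc ‖∫ a, φ a • g a ∂μ‖ ^ 2 ≤ (∫ a, |φ a| * ‖g a‖ ∂μ) ^ 2 :=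
        pow_le_pow_left₀ (norm_nonneg _) hnorm 2
    _ ≤ (∫ a, |φ a| ^ 2 ∂μ) * ∫ a, ‖g a‖ ^ 2 ∂μ := by
        refine sq_integral_mul_le_integral_sq_mul_integral_sq (by simpa only [sq_abs]) hg ?_
        simpa only [norm_smul, Real.norm_eq_abs] using hφg.norm
    _ = (∫ a, φ a ^ 2 ∂μ) * ∫ a, ‖g a‖ ^ 2 ∂μ := by simp only [sq_abs]

/-- Holds in either orientation: swapping `a` and `b` negates both integrals on the right. -/
theorem norm_intervalIntegral_smul_sq_le {a b : ℝ} {φ : ℝ → ℝ} {g : ℝ → E}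
    (hφ : ContinuousOn φ [[a, b]]) (hg : ContinuousOn g [[a, b]]) :
    ‖∫ t in a..b, φ t • g t‖ ^ 2 ≤ (∫ t in a..b, φ t ^ 2) * ∫ t in a..b, ‖g t‖ ^ 2 := by
  wlog hab : a ≤ b generalizing a b
  · have hba := this (uIcc_comm a b ▸ hφ) (uIcc_comm a b ▸ hg) (le_of_not_ge hab)
    rwa [intervalIntegral.integral_symm a b,
      intervalIntegral.integral_symm a b (f := fun t => φ t ^ 2),
      intervalIntegral.integral_symm a b (f := fun t => ‖g t‖ ^ 2), norm_neg, neg_mul_neg] at hba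
  simp only [intervalIntegral.integral_of_le hab]
  exact norm_integral_smul_sq_le ((hφ.pow 2).intervalIntegrable.1)
    ((hg.norm.pow 2).intervalIntegrable.1) ((hφ.smul hg).intervalIntegrable.1)

end CauchySchwarz

theorem norm_half_smul_add_sq_le {E : Type*} [NormedAddCommGroup E] [NormedSpace ℝ E] (x y : E) :
    ‖(2 : ℝ)⁻¹ • (x + y)‖ ^ 2 ≤ (‖x‖ ^ 2 + ‖y‖ ^ 2) / 2 := by
  rw [norm_smul, mul_pow, Real.norm_of_nonneg (by norm_num)]
  nlinarith [pow_le_pow_left₀ (norm_nonneg _) (norm_add_le x y) 2, add_sq_le (a := ‖x‖) (b := ‖y‖)]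

section Taylor

variable {E : Type*} [NormedAddCommGroup E] [NormedSpace ℝ E] [CompleteSpace E]
  {u u' u'' : ℝ → E} {a b : ℝ}

theorem sub_sub_smul_deriv_eq_integral
    (hu : ∀ t ∈ [[a, b]], HasDerivAt u (u' t) t) (hu' : ∀ t ∈ [[a, b]], HasDerivAt u' (u'' t) t)
    (hu'' : IntervalIntegrable u'' volume a b) :
    u b - u a - (b - a) • u' a = ∫ t in a..b, (b - t) • u'' t := by
  have hweight : ∀ t ∈ [[a, b]], HasDerivAt (fun t => b - t) (-1 : ℝ) t :=
    fun t _ => by simpa using (hasDerivAt_id t).const_sub b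
  have hu'_int : IntervalIntegrable u' volume a b :=
    ContinuousOn.intervalIntegrable fun t ht => (hu' t ht).continuousAt.continuousWithinAt
  have hparts :=
    intervalIntegral.integral_smul_deriv_eq_deriv_smul hweight hu' intervalIntegrable_const hu''
  have hftc := intervalIntegral.integral_eq_sub_of_hasDerivAt hu hu'_int
  simp only [neg_one_smul, intervalIntegral.integral_neg, sub_self, zero_smul] at hparts
  rw [hparts, hftc]
  abel

theorem norm_sub_sub_smul_deriv_sq_le
    (hu : ∀ t ∈ [[a, b]], HasDerivAt u (u' t) t) (hu' : ∀ t ∈ [[a, b]], HasDerivAt u' (u'' t) t)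
    (hu'' : ContinuousOn u'' [[a, b]]) :
    ‖u b - u a - (b - a) • u' a‖ ^ 2 ≤ (b - a) ^ 3 / 3 * ∫ t in a..b, ‖u'' t‖ ^ 2 := by
  have hweight : ∫ t in a..b, (b - t) ^ 2 = (b - a) ^ 3 / 3 := by
    rw [intervalIntegral.integral_comp_sub_left (fun t => t ^ 2), integral_pow]
    ring
  rw [sub_sub_smul_deriv_eq_integral hu hu' hu''.intervalIntegrable, ← hweight]
  exact norm_intervalIntegral_smul_sq_le (by fun_prop) hu''

end Taylor

open intervalIntegral

theorem midpoint_average_consistency_general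
    {E : Type*} [NormedAddCommGroup E] [NormedSpace ℝ E] [CompleteSpace E]
    (t0 t1 : ℝ) (ht : t0 < t1)
    (u u' u'' : ℝ → E) (s : Set ℝ) (hsub : Set.Icc t0 t1 ⊆ s)
    (hderiv1 : ∀ t ∈ s, HasDerivAt u (u' t) t)
    (hderiv2 : ∀ t ∈ s, HasDerivAt u' (u'' t) t)
    (hcont : ContinuousOn u'' s) :
    ‖(2 : ℝ)⁻¹ • (u t0 + u t1) - u ((t0 + t1) / 2)‖ ^ 2
      ≤ (t1 - t0) ^ 3 / 24 * ∫ t in t0..t1, ‖u'' t‖ ^ 2 := by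
  set tm := (t0 + t1) / 2 with htm
  have hmid : tm ∈ Icc t0 t1 := ⟨by linarith, by linarith⟩
  have hleft : [[tm, t0]] ⊆ s := (uIcc_subset_Icc hmid (left_mem_Icc.2 ht.le)).trans hsub
  have hright : [[tm, t1]] ⊆ s := (uIcc_subset_Icc hmid (right_mem_Icc.2 ht.le)).trans hsub
  have hR0 := norm_sub_sub_smul_deriv_sq_le (fun t hts => hderiv1 t (hleft hts))
    (fun t hts => hderiv2 t (hleft hts)) (hcont.mono hleft)
  have hR1 := norm_sub_sub_smul_deriv_sq_le (fun t hts => hderiv1 t (hright hts))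
    (fun t hts => hderiv2 t (hright hts)) (hcont.mono hright)
  set R0 := u t0 - u tm - (t0 - tm) • u' tm
  set R1 := u t1 - u tm - (t1 - tm) • u' tm
  have hdefect : (2 : ℝ)⁻¹ • (u t0 + u t1) - u tm = (2 : ℝ)⁻¹ • (R0 + R1) := by
    have hsym : t0 - tm = -(t1 - tm) := by rw [htm]; ring
    simp only [R0, R1, hsym]
    module
  have hK0 : (t0 - tm) ^ 3 / 3 = -((t1 - t0) ^ 3 / 24) := by rw [htm]; ring
  have hK1 : (t1 - tm) ^ 3 / 3 = (t1 - t0) ^ 3 / 24 := by rw [htm]; ring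
  rw [hK0, integral_symm, neg_mul_neg] at hR0
  rw [hK1] at hR1
  have hsplit : ∫ t in t0..t1, ‖u'' t‖ ^ 2
      = (∫ t in t0..tm, ‖u'' t‖ ^ 2) + ∫ t in tm..t1, ‖u'' t‖ ^ 2 :=
    (integral_add_adjacent_intervals ((hcont.mono hleft).norm.pow 2).intervalIntegrable.symm
      ((hcont.mono hright).norm.pow 2).intervalIntegrable).symm
  have hA : 0 ≤ ∫ t in t0..tm, ‖u'' t‖ ^ 2 := integral_nonneg hmid.1 fun t _ => sq_nonneg _
  have hB : 0 ≤ ∫ t in tm..t1, ‖u'' t‖ ^ 2 := integral_nonneg hmid.2 fun t _ => sq_nonneg _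
  have hK : 0 ≤ (t1 - t0) ^ 3 / 24 := by have hτ : 0 < t1 - t0 := sub_pos.2 ht; positivity
  rw [hdefect, hsplit]
  calc ‖(2 : ℝ)⁻¹ • (R0 + R1)‖ ^ 2 ≤ (‖R0‖ ^ 2 + ‖R1‖ ^ 2) / 2 := norm_half_smul_add_sq_le R0 R1
    _ ≤ _ := by linarith [mul_nonneg hK hA, mul_nonneg hK hB]

/-- Consistency estimate for the midpoint average on a single time step:
if `u` is twice continuously differentiable on an open set containing `[t0, t1]`
(with derivative `u'` and second derivative `u''`), then
`‖(u t0 + u t1)/2 − u ((t0+t1)/2)‖² ≤ ((t1−t0)³/24) · ∫_{t0}^{t1} ‖u'' t‖² dt`. -/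
theorem midpoint_average_consistency
    {E : Type*} [NormedAddCommGroup E] [NormedSpace ℝ E] [CompleteSpace E]
    (t0 t1 : ℝ) (ht : t0 < t1)
    (u u' u'' : ℝ → E) (s : Set ℝ) (hs : IsOpen s) (hsub : Set.Icc t0 t1 ⊆ s)
    (hderiv1 : ∀ t ∈ s, HasDerivAt u (u' t) t)
    (hderiv2 : ∀ t ∈ s, HasDerivAt u' (u'' t) t)
    (hcont : ContinuousOn u'' s) :
    ‖(2 : ℝ)⁻¹ • (u t0 + u t1) - u ((t0 + t1) / 2)‖ ^ 2
      ≤ (t1 - t0) ^ 3 / 24 * ∫ t in t0..t1, ‖u'' t‖ ^ 2 :=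
  midpoint_average_consistency_general t0 t1 ht u u' u'' s hsub hderiv1 hderiv2 hcont
end

section
/- Let E be a real Banach space, let t0 < t1 be real numbers with τ = t1 − t0 and midpoint tm = (t0 + t1)/2, and let u : ℝ → E be three times continuously differentiable on an open interval containing [t0, t1]. Then ‖(u(t1) − u(t0))/τ − u'(tm)‖² ≤ (τ³/160) · ∫_{t0}^{t1} ‖u'''(t)‖² dt. -/
/-!
Expand `u` to second order about the midpoint `m` with integral remainder
`R c = ∫ σ in m..c, ((c - σ) ^ 2 / 2) • u''' σ`. Since `(t1 - m) ^ 2 = (t0 - m) ^ 2`, the quadratic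
terms at `t1` and `t0` cancel and the error of the difference quotient is `(R t1 - R t0) / τ`.
Cauchy–Schwarz against the kernel, whose square integrates to `(τ / 2) ^ 5 / 20` over each half
step, bounds `‖R tᵢ‖ ^ 2` by `(τ / 2) ^ 5 / 20` times the integral of `‖u'''‖ ^ 2` over that half,
and `‖R t1 - R t0‖ ^ 2 ≤ 2 (‖R t1‖ ^ 2 + ‖R t0‖ ^ 2)` gives the constant `1 / 320 ≤ 1 / 160`.
-/

open intervalIntegral Set

theorem sq_intervalIntegral_mul_le_of_le {a b : ℝ} (hab : a ≤ b) {f g : ℝ → ℝ}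
    (hf : ContinuousOn f (uIcc a b)) (hg : ContinuousOn g (uIcc a b)) :
    (∫ x in a..b, f x * g x) ^ 2 ≤ (∫ x in a..b, f x ^ 2) * ∫ x in a..b, g x ^ 2 := by
  have hfg : IntervalIntegrable (fun x => f x * g x) MeasureTheory.volume a b :=
    (hf.mul hg).intervalIntegrable
  have hf2 : IntervalIntegrable (fun x => f x ^ 2) MeasureTheory.volume a b :=
    (hf.pow 2).intervalIntegrable
  have hg2 : IntervalIntegrable (fun x => g x ^ 2) MeasureTheory.volume a b :=
    (hg.pow 2).intervalIntegrable
  -- `λ ↦ ∫ (f - λ g)²` is a nonnegative quadratic, so its discriminant is nonpositive.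
  have hquad : ∀ l : ℝ, 0 ≤ (∫ x in a..b, g x ^ 2) * (l * l)
      + (-2 * ∫ x in a..b, f x * g x) * l + ∫ x in a..b, f x ^ 2 := by
    intro l
    have hexp : ∫ x in a..b, (f x - l * g x) ^ 2
        = (∫ x in a..b, f x ^ 2) + (-2 * l * (∫ x in a..b, f x * g x)
          + l ^ 2 * ∫ x in a..b, g x ^ 2) := by
      rw [integral_congr (g := fun x => f x ^ 2 + (-2 * l * (f x * g x) + l ^ 2 * g x ^ 2))
          fun x _ => by ring, integral_add hf2 ((hfg.const_mul _).add (hg2.const_mul _)),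
        integral_add (hfg.const_mul _) (hg2.const_mul _), integral_const_mul, integral_const_mul]
    have : 0 ≤ ∫ x in a..b, (f x - l * g x) ^ 2 := integral_nonneg hab fun x _ => sq_nonneg _
    linarith
  have := discrim_le_zero hquad
  rw [discrim] at this
  linarith

theorem sq_intervalIntegral_mul_le {a b : ℝ} {f g : ℝ → ℝ}
    (hf : ContinuousOn f (uIcc a b)) (hg : ContinuousOn g (uIcc a b)) :
    (∫ x in a..b, f x * g x) ^ 2 ≤ (∫ x in a..b, f x ^ 2) * ∫ x in a..b, g x ^ 2 := by
  rcases le_total a b with hab | hba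
  · exact sq_intervalIntegral_mul_le_of_le hab hf hg
  · rw [uIcc_comm] at hf hg
    simpa only [integral_symm b a, neg_sq, neg_mul_neg] using
      sq_intervalIntegral_mul_le_of_le hba hf hg

section

variable {E : Type*} [NormedAddCommGroup E] [NormedSpace ℝ E]

theorem norm_intervalIntegral_smul_sq_le_s1 {a b : ℝ} {k : ℝ → ℝ} {f : ℝ → E}
    (hk : ContinuousOn k (uIcc a b)) (hf : ContinuousOn f (uIcc a b)) :
    ‖∫ x in a..b, k x • f x‖ ^ 2 ≤ (∫ x in a..b, k x ^ 2) * ∫ x in a..b, ‖f x‖ ^ 2 :=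
  calc ‖∫ x in a..b, k x • f x‖ ^ 2 ≤ |∫ x in a..b, |k x| * ‖f x‖| ^ 2 := by
        gcongr
        simpa only [norm_smul, Real.norm_eq_abs] using
          norm_integral_le_abs_integral_norm (f := fun x => k x • f x) (a := a) (b := b)
    _ ≤ (∫ x in a..b, |k x| ^ 2) * ∫ x in a..b, ‖f x‖ ^ 2 := by
        rw [sq_abs]
        exact sq_intervalIntegral_mul_le hk.abs hf.norm
    _ = (∫ x in a..b, k x ^ 2) * ∫ x in a..b, ‖f x‖ ^ 2 := by simp only [sq_abs]

theorem integral_sub_sq_div_two_sq (a b : ℝ) :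
    ∫ x in a..b, ((b - x) ^ 2 / 2) ^ 2 = (b - a) ^ 5 / 20 := by
  have : ∀ x : ℝ, ((b - x) ^ 2 / 2) ^ 2 = (x - b) ^ 4 / 4 := fun x => by ring
  simp only [this, integral_div, integral_comp_sub_right (fun x => x ^ 4), integral_pow]
  ring

noncomputable def secondOrderTaylorRemainder (u u' u'' : ℝ → E) (a b : ℝ) : E :=
  u b - (u a + (b - a) • u' a + ((b - a) ^ 2 / 2) • u'' a)

theorem midpoint_difference_quotient_sub_eq {a b : ℝ} (hab : a ≠ b) (u u' u'' : ℝ → E) :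
    (b - a)⁻¹ • (u b - u a) - u' ((a + b) / 2)
      = (b - a)⁻¹ • (secondOrderTaylorRemainder u u' u'' ((a + b) / 2) b
          - secondOrderTaylorRemainder u u' u'' ((a + b) / 2) a) := by
  have hsq : (b - (a + b) / 2) ^ 2 = (a - (a + b) / 2) ^ 2 := by ring
  have hdiff : secondOrderTaylorRemainder u u' u'' ((a + b) / 2) b
      - secondOrderTaylorRemainder u u' u'' ((a + b) / 2) a
        = (u b - u a) - (b - a) • u' ((a + b) / 2) := by
    simp only [secondOrderTaylorRemainder, hsq]
    module
  rw [hdiff, smul_sub _ (u b - u a), smul_smul, inv_mul_cancel₀ (sub_ne_zero.mpr hab.symm),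
    one_smul]

variable [CompleteSpace E]

theorem secondOrderTaylorRemainder_eq_integral {a b : ℝ} {u u' u'' u''' : ℝ → E}
    (h1 : ∀ t ∈ uIcc a b, HasDerivAt u (u' t) t) (h2 : ∀ t ∈ uIcc a b, HasDerivAt u' (u'' t) t)
    (h3 : ∀ t ∈ uIcc a b, HasDerivAt u'' (u''' t) t) (hc : ContinuousOn u''' (uIcc a b)) :
    secondOrderTaylorRemainder u u' u'' a b = ∫ t in a..b, ((b - t) ^ 2 / 2) • u''' t := by
  have hderiv : ∀ t ∈ uIcc a b,
      HasDerivAt (fun t => u t + (b - t) • u' t + ((b - t) ^ 2 / 2) • u'' t)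
        (((b - t) ^ 2 / 2) • u''' t) t := by
    intro t ht
    have hlin : HasDerivAt (fun x : ℝ => b - x) (-1) t := by
      simpa using (hasDerivAt_id t).const_sub b
    have hquad : HasDerivAt (fun x : ℝ => (b - x) ^ 2 / 2) (-(b - t)) t :=
      ((hlin.pow 2).div_const 2).congr_deriv (by ring)
    refine (((h1 t ht).add (hlin.smul (h2 t ht))).add (hquad.smul (h3 t ht))).congr_deriv ?_
    module
  rw [secondOrderTaylorRemainder, integral_eq_sub_of_hasDerivAt hderiv
    ((continuousOn_const.sub continuousOn_id).pow 2 |>.div_const 2 |>.smul hc).intervalIntegrable]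
  simp only [sub_self, ne_eq, OfNat.ofNat_ne_zero, not_false_eq_true, zero_pow, zero_div,
    zero_smul, add_zero]

theorem norm_sq_secondOrderTaylorRemainder_le {a b : ℝ} {u u' u'' u''' : ℝ → E}
    (h1 : ∀ t ∈ uIcc a b, HasDerivAt u (u' t) t) (h2 : ∀ t ∈ uIcc a b, HasDerivAt u' (u'' t) t)
    (h3 : ∀ t ∈ uIcc a b, HasDerivAt u'' (u''' t) t) (hc : ContinuousOn u''' (uIcc a b)) :
    ‖secondOrderTaylorRemainder u u' u'' a b‖ ^ 2
      ≤ (b - a) ^ 5 / 20 * ∫ t in a..b, ‖u''' t‖ ^ 2 := by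
  rw [secondOrderTaylorRemainder_eq_integral h1 h2 h3 hc, ← integral_sub_sq_div_two_sq]
  exact norm_intervalIntegral_smul_sq_le_s1
    ((continuousOn_const.sub continuousOn_id).pow 2 |>.div_const 2) hc

end

theorem midpoint_difference_quotient_consistency_general
    {E : Type*} [NormedAddCommGroup E] [NormedSpace ℝ E] [CompleteSpace E]
    (t0 t1 : ℝ) (ht : t0 < t1)
    (u u' u'' u''' : ℝ → E) (s : Set ℝ) (hsub : Set.Icc t0 t1 ⊆ s)
    (hderiv1 : ∀ t ∈ s, HasDerivAt u (u' t) t)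
    (hderiv2 : ∀ t ∈ s, HasDerivAt u' (u'' t) t)
    (hderiv3 : ∀ t ∈ s, HasDerivAt u'' (u''' t) t)
    (hcont : ContinuousOn u''' s) :
    ‖(t1 - t0)⁻¹ • (u t1 - u t0) - u' ((t0 + t1) / 2)‖ ^ 2
      ≤ (t1 - t0) ^ 3 / 160 * ∫ t in t0..t1, ‖u''' t‖ ^ 2 := by
  rw [midpoint_difference_quotient_sub_eq ht.ne]
  set m := (t0 + t1) / 2 with hm
  set R := secondOrderTaylorRemainder u u' u'' m
  have hmem : m ∈ Icc t0 t1 := ⟨by linarith, by linarith⟩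
  have hR : ∀ c ∈ Icc t0 t1, ‖R c‖ ^ 2 ≤ (c - m) ^ 5 / 20 * ∫ t in m..c, ‖u''' t‖ ^ 2 := by
    intro c hc
    have hsub' : uIcc m c ⊆ s := (uIcc_subset_Icc hmem hc).trans hsub
    exact norm_sq_secondOrderTaylorRemainder_le (fun t ht => hderiv1 t (hsub' ht))
      (fun t ht => hderiv2 t (hsub' ht)) (fun t ht => hderiv3 t (hsub' ht)) (hcont.mono hsub')
  have hint : IntervalIntegrable (fun t => ‖u''' t‖ ^ 2) MeasureTheory.volume t0 t1 :=
    ((hcont.mono (uIcc_of_le ht.le ▸ hsub)).norm.pow 2).intervalIntegrable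
  have hsplit := integral_add_adjacent_intervals
    (hint.mono_set (uIcc_subset_uIcc_left (Icc_subset_uIcc hmem)))
    (hint.mono_set (uIcc_subset_uIcc_right (Icc_subset_uIcc hmem)))
  have hτ : t1 - t0 ≠ 0 := (sub_pos.mpr ht).ne'
  calc ‖(t1 - t0)⁻¹ • (R t1 - R t0)‖ ^ 2
      ≤ (t1 - t0)⁻¹ ^ 2 * (2 * (‖R t1‖ ^ 2 + ‖R t0‖ ^ 2)) := by
        rw [norm_smul, mul_pow, Real.norm_eq_abs, sq_abs]
        gcongr
        exact (pow_le_pow_left₀ (norm_nonneg _) (norm_sub_le _ _) 2).trans add_sq_le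
    _ ≤ (t1 - t0)⁻¹ ^ 2 * (2 * ((t1 - m) ^ 5 / 20 * (∫ t in m..t1, ‖u''' t‖ ^ 2)
          + (t0 - m) ^ 5 / 20 * ∫ t in m..t0, ‖u''' t‖ ^ 2)) := by
        gcongr
        exacts [hR t1 ⟨ht.le, le_rfl⟩, hR t0 ⟨le_rfl, ht.le⟩]
    _ = (t1 - t0) ^ 3 / 320 * ∫ t in t0..t1, ‖u''' t‖ ^ 2 := by
        rw [integral_symm t0 m, ← hsplit, show t1 - m = (t1 - t0) / 2 by rw [hm]; ring,
          show t0 - m = -((t1 - t0) / 2) by rw [hm]; ring]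
        field_simp
        ring
    _ ≤ (t1 - t0) ^ 3 / 160 * ∫ t in t0..t1, ‖u''' t‖ ^ 2 := by
        gcongr
        · exact integral_nonneg ht.le fun t _ => sq_nonneg _
        · norm_num

/-- Consistency estimate for the midpoint difference quotient on a single time step:
if `u` is three times continuously differentiable on an open set containing `[t0, t1]`
(with derivatives `u'`, `u''`, `u'''`), then
`‖(u t1 − u t0)/(t1−t0) − u' ((t0+t1)/2)‖² ≤ ((t1−t0)³/160) · ∫_{t0}^{t1} ‖u''' t‖² dt`. -/
theorem midpoint_difference_quotient_consistency
    {E : Type*} [NormedAddCommGroup E] [NormedSpace ℝ E] [CompleteSpace E]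
    (t0 t1 : ℝ) (ht : t0 < t1)
    (u u' u'' u''' : ℝ → E) (s : Set ℝ) (hs : IsOpen s) (hsub : Set.Icc t0 t1 ⊆ s)
    (hderiv1 : ∀ t ∈ s, HasDerivAt u (u' t) t)
    (hderiv2 : ∀ t ∈ s, HasDerivAt u' (u'' t) t)
    (hderiv3 : ∀ t ∈ s, HasDerivAt u'' (u''' t) t)
    (hcont : ContinuousOn u''' s) :
    ‖(t1 - t0)⁻¹ • (u t1 - u t0) - u' ((t0 + t1) / 2)‖ ^ 2
      ≤ (t1 - t0) ^ 3 / 160 * ∫ t in t0..t1, ‖u''' t‖ ^ 2 :=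
  midpoint_difference_quotient_consistency_general t0 t1 ht u u' u'' u''' s hsub hderiv1 hderiv2
    hderiv3 hcont
end

section
/- Let E be a real inner product space and let u, B, F, G : ℕ → E and τ : ℕ → ℝ satisfy, for every n, u(n+1) − u(n) = τ(n)·F(n), B(n+1) − B(n) = τ(n)·G(n), and ⟨F(n), (B(n+1) + B(n))/2⟩ + ⟨G(n), (u(n+1) + u(n))/2⟩ = 0. Then ⟨u(n), B(n)⟩ = ⟨u(0), B(0)⟩ for all n ∈ ℕ. -/
open RealInnerProductSpace

/-- Discrete conservation of cross-helicity by the variable-step midpoint method: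
if `u(n+1) − u(n) = τ(n)·F(n)`, `B(n+1) − B(n) = τ(n)·G(n)` and
`⟨F(n), (B(n+1)+B(n))/2⟩ + ⟨G(n), (u(n+1)+u(n))/2⟩ = 0` for all `n`, then
`⟨u(n), B(n)⟩ = ⟨u(0), B(0)⟩` for all `n`. -/
theorem midpoint_conserves_cross_helicity
    {E : Type*} [NormedAddCommGroup E] [InnerProductSpace ℝ E]
    (u B F G : ℕ → E) (τ : ℕ → ℝ)
    (hu : ∀ n, u (n + 1) - u n = τ n • F n)
    (hB : ∀ n, B (n + 1) - B n = τ n • G n)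
    (hmid : ∀ n, ⟪F n, (2 : ℝ)⁻¹ • (B (n + 1) + B n)⟫ +
                 ⟪G n, (2 : ℝ)⁻¹ • (u (n + 1) + u n)⟫ = 0) :
    ∀ n, ⟪u n, B n⟫ = ⟪u 0, B 0⟫ := by
  intro n
  induction n with
  | zero => rfl
  | succ n ih =>
    rw [← ih]
    have hu' : u (n + 1) = u n + τ n • F n := by
      have := hu n; linear_combination (norm := abel) this
    have hB' : B (n + 1) = B n + τ n • G n := by
      have := hB n; linear_combination (norm := abel) this
    have h := hmid n
    rw [hu', hB'] at h ⊢
    simp only [inner_add_left, inner_add_right, inner_smul_left, inner_smul_right,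
      real_inner_smul_left, real_inner_smul_right, RCLike.conj_to_real] at h ⊢
    have hsym1 : ⟪F n, u n⟫ = ⟪u n, F n⟫ := real_inner_comm _ _
    have hsym2 : ⟪G n, B n⟫ = ⟪B n, G n⟫ := real_inner_comm _ _
    have hsym3 : ⟪G n, F n⟫ = ⟪F n, G n⟫ := real_inner_comm _ _
    have hsym4 : ⟪F n, B n⟫ = ⟪B n, F n⟫ := real_inner_comm _ _
    have hsym5 : ⟪G n, u n⟫ = ⟪u n, G n⟫ := real_inner_comm _ _
    linear_combination τ n * h - τ n * hsym5 - (τ n)^2/2 * hsym3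
end
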